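/- For a critical Galton-Watson process with E[ξ]=1 and Var(ξ)=2B ∈ (0,∞), lim_{n→∞} n²(f_{n+1}(0) - f_n(0)) = 1/B, where f_n(0) = P(Z(n) = 0). -/

import Mathlib

/-!
Write `q n = 1 - f_n(0)`. Expanding `(1 - t) ^ k = 1 - k t + t ^ 2 r_k(t)` termwise gives
`f (1 - t) = 1 - t + t ^ 2 R(t)` with `R` continuous and positive on `[0, 1]` and `R 0 = B`,
so `q (n + 1) = q n - q n ^ 2 R(q n)`. Hence `q n` decreases to the fixed point `0`,
`1 / q (n + 1) - 1 / q n = R(q n) q n / q (n + 1) → B`, by Cesàro `n q n → 1 / B`, and finally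
`n ^ 2 (q n - q (n + 1)) = (n q n) ^ 2 R(q n) → 1 / B`.
-/

open MeasureTheory Filter Topology Asymptotics Real

/-- Probability generating function of the offspring distribution `p`. -/
noncomputable def pgf (p : ℕ → ℝ) (s : ℝ) : ℝ := ∑' k, p k * s ^ k

/-- `n`-th functional iterate of the offspring generating function. -/
noncomputable def pgfIter (p : ℕ → ℝ) : ℕ → ℝ → ℝ
  | 0 => fun s => s
  | n + 1 => fun s => pgf p (pgfIter p n s)

open Set

theorem summable_of_tsum_ne_zero {ι α : Type*} [AddCommMonoid α] [TopologicalSpace α] {f : ι → α}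
    (h : ∑' i, f i ≠ 0) : Summable f := by
  by_contra hf
  exact h (tsum_eq_zero_of_not_summable hf)

noncomputable def oneSubPowRem : ℕ → ℝ → ℝ
  | 0 => fun _ => 0
  | k + 1 => fun t => (1 - t) * oneSubPowRem k t + k

theorem one_sub_pow_eq (k : ℕ) (t : ℝ) :
    (1 - t) ^ k = 1 - k * t + t ^ 2 * oneSubPowRem k t := by
  induction k with
  | zero => simp [oneSubPowRem]
  | succ k ih =>
    rw [pow_succ, ih, oneSubPowRem]
    push_cast
    ring

theorem oneSubPowRem_nonneg (k : ℕ) {t : ℝ} (ht : t ≤ 1) : 0 ≤ oneSubPowRem k t := by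
  induction k with
  | zero => simp [oneSubPowRem]
  | succ k ih =>
    have : 0 ≤ (1 - t) * oneSubPowRem k t := mul_nonneg (by linarith) ih
    simp only [oneSubPowRem]
    positivity

theorem oneSubPowRem_le (k : ℕ) {t : ℝ} (ht₀ : 0 ≤ t) (ht₁ : t ≤ 1) :
    oneSubPowRem k t ≤ k * (k - 1) / 2 := by
  induction k with
  | zero => simp [oneSubPowRem]
  | succ k ih =>
    have : (1 - t) * oneSubPowRem k t ≤ oneSubPowRem k t := by
      nlinarith [oneSubPowRem_nonneg k ht₁]
    simp only [oneSubPowRem]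
    push_cast
    linarith

theorem oneSubPowRem_apply_zero (k : ℕ) : oneSubPowRem k 0 = k * (k - 1) / 2 := by
  induction k with
  | zero => simp [oneSubPowRem]
  | succ k ih =>
    simp only [oneSubPowRem, ih]
    push_cast
    ring

theorem one_le_oneSubPowRem {k : ℕ} (hk : 2 ≤ k) {t : ℝ} (ht : t ≤ 1) :
    1 ≤ oneSubPowRem k t := by
  obtain ⟨m, rfl⟩ : ∃ m, k = m + 1 := ⟨k - 1, by omega⟩
  have hm : (1 : ℝ) ≤ m := by exact_mod_cast (by omega : 1 ≤ m)
  have : 0 ≤ (1 - t) * oneSubPowRem m t := mul_nonneg (by linarith) (oneSubPowRem_nonneg m ht)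
  simp only [oneSubPowRem]
  linarith

theorem continuous_oneSubPowRem (k : ℕ) : Continuous (oneSubPowRem k) := by
  induction k with
  | zero => exact continuous_const
  | succ k ih =>
    simp only [oneSubPowRem]
    fun_prop

noncomputable def pgfRem (p : ℕ → ℝ) (t : ℝ) : ℝ := ∑' k, p k * oneSubPowRem k t

section pgfRem

variable {p : ℕ → ℝ}

theorem summable_natCast_mul_of_summable_sq_mul (hp0 : ∀ k, 0 ≤ p k)
    (hsq : Summable fun k : ℕ => (k : ℝ) ^ 2 * p k) : Summable fun k : ℕ => (k : ℝ) * p k :=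
  hsq.of_nonneg_of_le (fun k => by have := hp0 k; positivity) fun k =>
    mul_le_mul_of_nonneg_right (by exact_mod_cast Nat.le_self_pow two_ne_zero k) (hp0 k)

theorem summable_mul_choose_two (hp0 : ∀ k, 0 ≤ p k)
    (hsq : Summable fun k : ℕ => (k : ℝ) ^ 2 * p k) :
    Summable fun k : ℕ => p k * (k * (k - 1) / 2) := by
  have := (hsq.sub (summable_natCast_mul_of_summable_sq_mul hp0 hsq)).div_const 2
  exact this.congr fun k => by ring

theorem norm_mul_oneSubPowRem_le (hp0 : ∀ k, 0 ≤ p k) (k : ℕ) {t : ℝ} (ht : t ∈ Icc 0 1) :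
    ‖p k * oneSubPowRem k t‖ ≤ p k * (k * (k - 1) / 2) := by
  rw [Real.norm_of_nonneg (mul_nonneg (hp0 k) (oneSubPowRem_nonneg k ht.2))]
  exact mul_le_mul_of_nonneg_left (oneSubPowRem_le k ht.1 ht.2) (hp0 k)

theorem summable_mul_oneSubPowRem (hp0 : ∀ k, 0 ≤ p k)
    (hsq : Summable fun k : ℕ => (k : ℝ) ^ 2 * p k) {t : ℝ} (ht : t ∈ Icc 0 1) :
    Summable fun k => p k * oneSubPowRem k t :=
  (summable_mul_choose_two hp0 hsq).of_norm_bounded fun k => norm_mul_oneSubPowRem_le hp0 k ht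

theorem continuousOn_pgfRem (hp0 : ∀ k, 0 ≤ p k)
    (hsq : Summable fun k : ℕ => (k : ℝ) ^ 2 * p k) : ContinuousOn (pgfRem p) (Icc 0 1) :=
  continuousOn_tsum (fun k => (continuous_const.mul (continuous_oneSubPowRem k)).continuousOn)
    (summable_mul_choose_two hp0 hsq) fun k _ ht => norm_mul_oneSubPowRem_le hp0 k ht

theorem pgfRem_zero (hp0 : ∀ k, 0 ≤ p k) (hsq : Summable fun k : ℕ => (k : ℝ) ^ 2 * p k) :
    pgfRem p 0 = ((∑' k : ℕ, (k : ℝ) ^ 2 * p k) - ∑' k : ℕ, (k : ℝ) * p k) / 2 := by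
  rw [← hsq.tsum_sub (summable_natCast_mul_of_summable_sq_mul hp0 hsq), ← tsum_div_const]
  exact tsum_congr fun k => by rw [oneSubPowRem_apply_zero]; ring

theorem exists_two_le_pos_of_pgfRem_zero_ne_zero (hp0 : ∀ k, 0 ≤ p k) (h : pgfRem p 0 ≠ 0) :
    ∃ k, 2 ≤ k ∧ 0 < p k := by
  obtain ⟨k, hk⟩ : ∃ k, p k * oneSubPowRem k 0 ≠ 0 := by
    by_contra! hzero
    exact h (by simp [pgfRem, hzero])
  rw [oneSubPowRem_apply_zero, mul_ne_zero_iff] at hk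
  refine ⟨k, ?_, (hp0 k).lt_of_ne' hk.1⟩
  by_contra! hk2
  interval_cases k <;> simp at hk

theorem pgfRem_pos (hp0 : ∀ k, 0 ≤ p k) (hsq : Summable fun k : ℕ => (k : ℝ) ^ 2 * p k)
    {k : ℕ} (hk : 2 ≤ k) (hpk : 0 < p k) {t : ℝ} (ht : t ∈ Icc 0 1) : 0 < pgfRem p t :=
  calc 0 < p k := hpk
    _ ≤ p k * oneSubPowRem k t := le_mul_of_one_le_right hpk.le (one_le_oneSubPowRem hk ht.2)
    _ ≤ pgfRem p t := (summable_mul_oneSubPowRem hp0 hsq ht).le_tsum k fun j _ =>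
        mul_nonneg (hp0 j) (oneSubPowRem_nonneg j ht.2)

theorem pgf_one_sub (hp0 : ∀ k, 0 ≤ p k) (hps : Summable p)
    (hsq : Summable fun k : ℕ => (k : ℝ) ^ 2 * p k) {t : ℝ} (ht : t ∈ Icc 0 1) :
    pgf p (1 - t) = ∑' k, p k - t * ∑' k : ℕ, (k : ℝ) * p k + t ^ 2 * pgfRem p t := by
  have hk1 := summable_natCast_mul_of_summable_sq_mul hp0 hsq
  rw [pgf, pgfRem, ← tsum_mul_left, ← tsum_mul_left, ← hps.tsum_sub (hk1.mul_left t),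
    ← (hps.sub (hk1.mul_left t)).tsum_add ((summable_mul_oneSubPowRem hp0 hsq ht).mul_left _)]
  exact tsum_congr fun k => by rw [one_sub_pow_eq]; ring

end pgfRem

section pgf

variable {p : ℕ → ℝ}

theorem pgf_nonneg (hp0 : ∀ k, 0 ≤ p k) {s : ℝ} (hs : 0 ≤ s) : 0 ≤ pgf p s :=
  tsum_nonneg fun k => mul_nonneg (hp0 k) (pow_nonneg hs k)

theorem pgf_lt_one (hp0 : ∀ k, 0 ≤ p k) (hp1 : ∑' k, p k = 1) {k : ℕ} (hk : k ≠ 0)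
    (hpk : 0 < p k) {s : ℝ} (hs : s ∈ Ico 0 1) : pgf p s < 1 := by
  have hps : Summable p := summable_of_tsum_ne_zero (hp1 ▸ one_ne_zero)
  have hle : ∀ j, p j * s ^ j ≤ p j := fun j =>
    mul_le_of_le_one_right (hp0 j) (pow_le_one₀ hs.1 hs.2.le)
  have hlt : p k * s ^ k < p k :=
    mul_lt_of_lt_one_right hpk (pow_lt_one₀ hs.1 hs.2 hk)
  rw [← hp1]
  exact hps.tsum_lt_tsum_of_nonneg (fun j => mul_nonneg (hp0 j) (pow_nonneg hs.1 j)) hle hlt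

theorem pgfIter_zero_mem_Ico (hp0 : ∀ k, 0 ≤ p k) (hp1 : ∑' k, p k = 1) {k : ℕ} (hk : k ≠ 0)
    (hpk : 0 < p k) (n : ℕ) : pgfIter p n 0 ∈ Ico 0 1 := by
  induction n with
  | zero => simp [pgfIter]
  | succ n ih => exact ⟨pgf_nonneg hp0 ih.1, pgf_lt_one hp0 hp1 hk hpk ih⟩

end pgf

section QuadraticRecurrence

variable {q r : ℕ → ℝ} {B : ℝ}

theorem tendsto_zero_of_sub_sq_mul_recurrence {R : ℝ → ℝ}
    (hR : ContinuousOn R (Icc 0 1)) (hR_pos : ∀ t ∈ Icc 0 1, 0 < R t) (hq : ∀ n, q n ∈ Icc 0 1)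
    (hrec : ∀ n, q (n + 1) = q n - q n ^ 2 * R (q n)) : Tendsto q atTop (𝓝 0) := by
  have hanti : Antitone q := antitone_nat_of_succ_le fun n => by
    rw [hrec n]
    nlinarith [hR_pos _ (hq n)]
  have hbdd : BddBelow (range q) := ⟨0, by rintro _ ⟨n, rfl⟩; exact (hq n).1⟩
  set L := ⨅ n, q n
  have hqL : Tendsto q atTop (𝓝 L) := tendsto_atTop_ciInf hanti hbdd
  have hL : L ∈ Icc 0 1 := isClosed_Icc.mem_of_tendsto hqL (Eventually.of_forall hq)
  have hRL : Tendsto (fun n => R (q n)) atTop (𝓝 (R L)) :=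
    (hR L hL).tendsto.comp (tendsto_nhdsWithin_iff.2 ⟨hqL, Eventually.of_forall hq⟩)
  have hfix : L = L - L ^ 2 * R L :=
    tendsto_nhds_unique (hqL.comp (tendsto_add_atTop_nat 1))
      ((hqL.sub ((hqL.pow 2).mul hRL)).congr fun n => (hrec n).symm)
  have hL0 : L ^ 2 * R L = 0 := by linarith
  rw [mul_eq_zero, or_iff_left (hR_pos L hL).ne', sq_eq_zero_iff] at hL0
  rwa [hL0] at hqL

theorem tendsto_inv_sub_inv_of_sub_sq_mul_recurrence (hq_ne : ∀ n, q n ≠ 0)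
    (hrec : ∀ n, q (n + 1) = q n - q n ^ 2 * r n) (hq : Tendsto q atTop (𝓝 0))
    (hr : Tendsto r atTop (𝓝 B)) :
    Tendsto (fun n => (q (n + 1))⁻¹ - (q n)⁻¹) atTop (𝓝 B) := by
  have hratio : Tendsto (fun n => q n / q (n + 1)) atTop (𝓝 1) := by
    have h : Tendsto (fun n => 1 - q n * r n) atTop (𝓝 1) := by
      simpa using tendsto_const_nhds.sub (hq.mul hr)
    have h' := h.inv₀ one_ne_zero
    rw [inv_one] at h'
    refine h'.congr fun n => ?_
    rw [hrec n, show q n - q n ^ 2 * r n = q n * (1 - q n * r n) by ring,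
      div_mul_cancel_left₀ (hq_ne n)]
  have hlim := hr.mul hratio
  rw [mul_one] at hlim
  refine hlim.congr fun n => ?_
  have hdiff : q n - q (n + 1) = q n ^ 2 * r n := by rw [hrec n]; ring
  rw [inv_sub_inv (hq_ne _) (hq_ne _), hdiff]
  field_simp [hq_ne n, hq_ne (n + 1)]

theorem tendsto_natCast_mul_of_tendsto_inv_sub_inv (hB : B ≠ 0)
    (h : Tendsto (fun n => (q (n + 1))⁻¹ - (q n)⁻¹) atTop (𝓝 B)) :
    Tendsto (fun n : ℕ => n * q n) atTop (𝓝 B⁻¹) := by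
  have hces : Tendsto (fun n : ℕ => (n : ℝ)⁻¹ * ((q n)⁻¹ - (q 0)⁻¹)) atTop (𝓝 B) :=
    h.cesaro.congr fun n => by rw [Finset.sum_range_sub (fun i => (q i)⁻¹)]
  have hinv : Tendsto (fun n : ℕ => (n : ℝ)⁻¹ * (q 0)⁻¹) atTop (𝓝 0) := by
    simpa using (tendsto_inv_atTop_zero.comp tendsto_natCast_atTop_atTop).mul_const (q 0)⁻¹
  have hlim := (hces.add hinv).inv₀ (by simpa using hB)
  rw [add_zero] at hlim
  refine hlim.congr fun n => ?_
  rw [← mul_add, sub_add_cancel, ← mul_inv, inv_inv]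

theorem tendsto_sq_mul_sub_of_sub_sq_mul_recurrence (hB : B ≠ 0) (hq_ne : ∀ n, q n ≠ 0)
    (hrec : ∀ n, q (n + 1) = q n - q n ^ 2 * r n) (hq : Tendsto q atTop (𝓝 0))
    (hr : Tendsto r atTop (𝓝 B)) :
    Tendsto (fun n : ℕ => (n : ℝ) ^ 2 * (q n - q (n + 1))) atTop (𝓝 B⁻¹) := by
  have hnq := tendsto_natCast_mul_of_tendsto_inv_sub_inv hB
    (tendsto_inv_sub_inv_of_sub_sq_mul_recurrence hq_ne hrec hq hr)
  have hlim : B⁻¹ ^ 2 * B = B⁻¹ := by field_simp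
  refine hlim ▸ ((hnq.pow 2).mul hr).congr fun n => ?_
  rw [hrec n]
  ring

end QuadraticRecurrence

theorem extinction_increment_limit    (p : ℕ → ℝ) (hp0 : ∀ k, 0 ≤ p k) (hp1 : ∑' k, p k = 1)
    (hmean : ∑' k : ℕ, (k : ℝ) * p k = 1) (B : ℝ) (hB : 0 < B)
    (hsq : Summable fun k : ℕ => (k : ℝ) ^ 2 * p k)
    (hvar : (∑' k : ℕ, (k : ℝ) ^ 2 * p k) - 1 = 2 * B) :
    Tendsto (fun n : ℕ => (n : ℝ) ^ 2 * (pgfIter p (n + 1) 0 - pgfIter p n 0))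
      atTop (𝓝 (1 / B)) := by
  have hps : Summable p := summable_of_tsum_ne_zero (hp1 ▸ one_ne_zero)
  have hR0 : pgfRem p 0 = B := by rw [pgfRem_zero hp0 hsq, hmean]; linarith
  obtain ⟨k, hk, hpk⟩ := exists_two_le_pos_of_pgfRem_zero_ne_zero hp0 (hR0 ▸ hB.ne')
  set q : ℕ → ℝ := fun n => 1 - pgfIter p n 0 with hq_def
  have hq_mem : ∀ n, q n ∈ Ioc 0 1 := fun n => by
    have hf := pgfIter_zero_mem_Ico hp0 hp1 (by omega) hpk n
    exact ⟨by linarith [hf.2], by linarith [hf.1]⟩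
  have hrec : ∀ n, q (n + 1) = q n - q n ^ 2 * pgfRem p (q n) := fun n => by
    have h := pgf_one_sub hp0 hps hsq (Ioc_subset_Icc_self (hq_mem n))
    rw [hp1, hmean, sub_sub_cancel] at h
    simp only [hq_def, pgfIter, h]
    ring
  have hR := continuousOn_pgfRem hp0 hsq
  have hq : Tendsto q atTop (𝓝 0) :=
    tendsto_zero_of_sub_sq_mul_recurrence hR (fun t ht => pgfRem_pos hp0 hsq hk hpk ht)
      (fun n => Ioc_subset_Icc_self (hq_mem n)) hrec
  have hr : Tendsto (fun n => pgfRem p (q n)) atTop (𝓝 B) := hR0 ▸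
    (hR 0 ⟨le_rfl, zero_le_one⟩).tendsto.comp (tendsto_nhdsWithin_iff.2
      ⟨hq, Eventually.of_forall fun n => Ioc_subset_Icc_self (hq_mem n)⟩)
  simpa [hq_def, one_div, sub_sub_sub_cancel_left] using
    tendsto_sq_mul_sub_of_sub_sq_mul_recurrence hB.ne' (fun n => (hq_mem n).1.ne') hrec hq hr
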